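/- Under the hypotheses of the Taylor polynomial estimator lemma with ψ(t) = t^p for real p ≥ 2, μ > 0, |λ − μ| ≤ α μ for some 0 ≤ α < 1/2, and k + 1 > p, the bias satisfies |E[ϑ] − μ^p| ≤ (α/(1−α))^(k+1) · μ^p · (p/(k+1))^(⌊p⌋+1). In particular, if p is an integer, then E[ϑ] = μ^p. -/

import Mathlib

/-!
By independence, `E[ϑ] = ∑_{j ≤ k} C(p,j) λ^{p-j} (μ - λ)^j` is the degree-`k` Taylor polynomial
of `t ↦ t^p` at `λ`, evaluated at `μ`. The Lagrange remainder is
`C(p,k+1) ξ^{p-k-1} (μ - λ)^{k+1}` with `ξ` between `λ` and `μ`, so `ξ ≥ (1 - α)μ`; as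
`p - k - 1 < 0` it is at most `|C(p,k+1)| ((1 - α)μ)^{p-k-1} (αμ)^{k+1}
≤ |C(p,k+1)| (α/(1-α))^{k+1} μ^p`. Finally, in `(k+1)! |C(p,k+1)| = ∏_{i ≤ k} |p - i|` the
factors with `i ≤ ⌊p⌋` satisfy `p - i ≤ (p/(k+1)) (k+1-i)` and the others `i - p ≤ i - ⌊p⌋`,
whence `|C(p,k+1)| ≤ (p/(k+1))^{⌊p⌋+1}`. For integral `p ≤ k` the coefficient `C(p,k+1)`
vanishes, and the estimator is unbiased.
-/

open MeasureTheory ProbabilityTheory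

/-- Generalized binomial coefficient `C(p,j) = p(p-1)⋯(p-j+1)/j!`. -/
noncomputable def genBinom (p : ℝ) (j : ℕ) : ℝ :=
  (∏ i ∈ Finset.range j, (p - i)) / (Nat.factorial j)

open Finset Set
open scoped Nat

lemma genBinom_eq_descPochhammer_eval_div (p : ℝ) (j : ℕ) :
    genBinom p j = (descPochhammer ℝ j).eval p / j ! := by
  rw [genBinom, descPochhammer_eval_eq_prod_range]

lemma genBinom_natCast_of_lt {m n : ℕ} (h : m < n) : genBinom m n = 0 := by
  rw [genBinom, prod_eq_zero (mem_range.2 h) (sub_self _), zero_div]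

lemma prod_range_floor_abs_sub_le {p : ℝ} (hp : 0 ≤ p) {n : ℕ} (hn : p < n) :
    ∏ i ∈ range (⌊p⌋₊ + 1), |p - i| ≤ (p / n) ^ (⌊p⌋₊ + 1) * n.descFactorial (⌊p⌋₊ + 1) := by
  rw [← descPochhammer_eval_eq_descFactorial, descPochhammer_eval_eq_prod_range,
    pow_eq_prod_const, ← prod_mul_distrib]
  refine prod_le_prod (fun _ _ => abs_nonneg _) fun i hi => ?_
  have hip : (i : ℝ) ≤ p :=
    (Nat.cast_le.2 (Nat.lt_succ_iff.1 (mem_range.1 hi))).trans (Nat.floor_le hp)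
  have hn0 : (0 : ℝ) < n := hp.trans_lt hn
  rw [abs_of_nonneg (sub_nonneg.2 hip), div_mul_eq_mul_div, le_div_iff₀ hn0]
  nlinarith [mul_le_mul_of_nonneg_right hn.le (Nat.cast_nonneg (α := ℝ) i)]

lemma prod_Ico_floor_abs_sub_le {p : ℝ} (hp : 0 ≤ p) (n : ℕ) :
    ∏ i ∈ Ico (⌊p⌋₊ + 1) n, |p - i| ≤ (n - (⌊p⌋₊ + 1))! := by
  calc ∏ i ∈ Ico (⌊p⌋₊ + 1) n, |p - i|
      ≤ ∏ i ∈ Ico (⌊p⌋₊ + 1) n, ((i - ⌊p⌋₊ : ℕ) : ℝ) := by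
        refine prod_le_prod (fun _ _ => abs_nonneg _) fun i hi => ?_
        have hi := (mem_Ico.1 hi).1
        have hpi : p < i := (Nat.lt_floor_add_one p).trans_le (by exact_mod_cast hi)
        rw [abs_of_neg (sub_neg.2 hpi), Nat.cast_sub (by omega)]
        linarith [Nat.floor_le hp]
    _ = (n - (⌊p⌋₊ + 1))! := by
        rw [prod_Ico_eq_prod_range, ← prod_range_add_one_eq_factorial, Nat.cast_prod]
        exact prod_congr rfl fun j _ => by congr 1; omega

lemma abs_genBinom_le {p : ℝ} (hp : 0 ≤ p) {n : ℕ} (hn : p < n) :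
    |genBinom p n| ≤ (p / n) ^ (⌊p⌋₊ + 1) := by
  have hmn : ⌊p⌋₊ + 1 ≤ n := Nat.floor_lt hp |>.2 (by exact_mod_cast hn)
  rw [genBinom, abs_div, Nat.abs_cast, abs_prod, div_le_iff₀ (by positivity),
    ← prod_range_mul_prod_Ico _ hmn, ← Nat.factorial_mul_descFactorial hmn]
  push_cast
  calc _ ≤ (p / n) ^ (⌊p⌋₊ + 1) * n.descFactorial (⌊p⌋₊ + 1) * (n - (⌊p⌋₊ + 1))! :=
        mul_le_mul (prod_range_floor_abs_sub_le hp hn) (prod_Ico_floor_abs_sub_le hp n)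
          (prod_nonneg fun _ _ => abs_nonneg _) (by positivity)
    _ = _ := by ring

lemma iteratedDeriv_rpow_const (p x : ℝ) (n : ℕ) :
    iteratedDeriv n (fun t : ℝ => t ^ p) x = n ! * genBinom p n * x ^ (p - n) := by
  rw [iteratedDeriv_eq_iterate, Real.iter_deriv_rpow_const, genBinom_eq_descPochhammer_eval_div,
    mul_div_cancel₀ _ (by positivity)]

lemma taylorWithinEval_rpow_const {p a b : ℝ} (ha : 0 < a) (hab : a ≠ b) (n : ℕ) :
    taylorWithinEval (fun t : ℝ => t ^ p) n (uIcc a b) a b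
      = ∑ j ∈ range (n + 1), genBinom p j * a ^ (p - j) * (b - a) ^ j := by
  rw [taylor_within_apply]
  refine sum_congr rfl fun j _ => ?_
  rw [iteratedDerivWithin_eq_iteratedDeriv (uniqueDiffOn_uIcc hab)
    (Real.contDiffAt_rpow_const_of_ne ha.ne') left_mem_uIcc, iteratedDeriv_rpow_const, smul_eq_mul]
  field_simp

lemma contDiffOn_rpow_const_uIcc {p a b : ℝ} (ha : 0 < a) (hb : 0 < b) (n : WithTop ℕ∞) :
    ContDiffOn ℝ n (fun t : ℝ => t ^ p) (uIcc a b) := fun _ hx =>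
  (Real.contDiffAt_rpow_const_of_ne (lt_min ha hb |>.trans_le hx.1).ne').contDiffWithinAt

lemma exists_rpow_sub_taylor_eq {p a b : ℝ} (ha : 0 < a) (hb : 0 < b) (n : ℕ) :
    ∃ ξ ∈ uIcc a b, b ^ p - ∑ j ∈ range (n + 1), genBinom p j * a ^ (p - j) * (b - a) ^ j
      = genBinom p (n + 1) * ξ ^ (p - (n + 1 : ℕ)) * (b - a) ^ (n + 1) := by
  rcases eq_or_ne a b with rfl | hab
  · refine ⟨a, left_mem_uIcc, ?_⟩
    simp [sum_range_succ', genBinom]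
  obtain ⟨ξ, hξ, h⟩ := taylor_mean_remainder_lagrange_iteratedDeriv hab
    (contDiffOn_rpow_const_uIcc ha hb (n + 1))
  refine ⟨ξ, Ioo_subset_Icc_self hξ, ?_⟩
  rw [← taylorWithinEval_rpow_const ha hab, h, iteratedDeriv_rpow_const]
  field_simp

lemma mul_rpow_sub_mul_pow_le {α μ p : ℝ} (hμ : 0 < μ) (hα0 : 0 ≤ α) (hα : α < 1) (hp : 0 ≤ p)
    (n : ℕ) : ((1 - α) * μ) ^ (p - n) * (α * μ) ^ n ≤ (α / (1 - α)) ^ n * μ ^ p := by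
  have h1α : 0 < 1 - α := by linarith
  have hsplit : ((1 - α) * μ) ^ (p - n) * (α * μ) ^ n
      = (1 - α) ^ p * ((α / (1 - α)) ^ n * μ ^ p) := by
    rw [Real.rpow_sub (mul_pos h1α hμ), Real.rpow_natCast, Real.mul_rpow h1α.le hμ.le, div_pow,
      mul_pow, mul_pow]
    field_simp
  rw [hsplit]
  exact mul_le_of_le_one_left (by positivity) (Real.rpow_le_one h1α.le (by linarith) hp)

lemma abs_taylor_rpow_sub_le {p μ lam α : ℝ} (hp : 0 ≤ p) (hμ : 0 < μ) (hα0 : 0 ≤ α)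
    (hα : α < 1) (hlam : |lam - μ| ≤ α * μ) {n : ℕ} (hn : p ≤ n + 1) :
    |∑ j ∈ range (n + 1), genBinom p j * lam ^ (p - j) * (μ - lam) ^ j - μ ^ p|
      ≤ |genBinom p (n + 1)| * ((α / (1 - α)) ^ (n + 1) * μ ^ p) := by
  have hlam' : (1 - α) * μ ≤ lam := by linarith [(abs_le.1 hlam).1]
  have hlow : 0 < (1 - α) * μ := mul_pos (by linarith) hμ
  obtain ⟨ξ, hξ, h⟩ := exists_rpow_sub_taylor_eq (p := p) (hlow.trans_le hlam') hμ n
  have hξ : (1 - α) * μ ≤ ξ := le_trans (le_min hlam' (by nlinarith)) hξ.1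
  have hξpow : ξ ^ (p - (n + 1 : ℕ)) ≤ ((1 - α) * μ) ^ (p - (n + 1 : ℕ)) :=
    Real.rpow_le_rpow_of_nonpos hlow hξ (by push_cast; linarith)
  rw [abs_sub_comm, h, abs_mul, abs_mul, abs_pow, abs_sub_comm,
    abs_of_pos (Real.rpow_pos_of_pos (hlow.trans_le hξ) _), mul_assoc]
  refine mul_le_mul_of_nonneg_left ?_ (abs_nonneg _)
  calc ξ ^ (p - (n + 1 : ℕ)) * |lam - μ| ^ (n + 1)
      ≤ ((1 - α) * μ) ^ (p - (n + 1 : ℕ)) * (α * μ) ^ (n + 1) := by gcongr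
    _ ≤ (α / (1 - α)) ^ (n + 1) * μ ^ p := mul_rpow_sub_mul_pow_le hμ hα0 hα hp (n + 1)

namespace ProbabilityTheory.iIndepFun

variable {Ω ι : Type*} [MeasurableSpace Ω] {P : Measure Ω} {Y : ι → Ω → ℝ}

lemma integrable_finset_prod (hY : iIndepFun Y P) (hint : ∀ i, Integrable (Y i) P)
    (s : Finset ι) : Integrable (fun ω => ∏ i ∈ s, Y i ω) P := by
  classical
  have := hY.isProbabilityMeasure
  induction s using Finset.induction_on with
  | empty => exact integrable_const (1 : ℝ)
  | insert a s ha ih =>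
    simp_rw [prod_insert ha, ← Finset.prod_apply] at ih ⊢
    exact (hY.indepFun_finsetProd_of_notMem₀ (fun i => (hint i).aemeasurable) ha).symm
      |>.integrable_mul (hint a) ih

lemma integral_finset_prod (hY : iIndepFun Y P) (hint : ∀ i, Integrable (Y i) P)
    (s : Finset ι) : ∫ ω, ∏ i ∈ s, Y i ω ∂P = ∏ i ∈ s, ∫ ω, Y i ω ∂P := by
  classical
  have := hY.isProbabilityMeasure
  induction s using Finset.induction_on with
  | empty => simp
  | insert a s ha ih =>
    have hprod := (hY.integrable_finset_prod hint s).aestronglyMeasurable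
    simp_rw [prod_insert ha, ← ih, ← Finset.prod_apply] at hprod ⊢
    exact (hY.indepFun_finsetProd_of_notMem₀ (fun i => (hint i).aemeasurable) ha).symm
      |>.integral_mul_eq_mul_integral (hint a).aestronglyMeasurable hprod

end ProbabilityTheory.iIndepFun

lemma integral_sum_mul_prod_filter_lt_sub {Ω : Type*} [MeasurableSpace Ω] {P : Measure Ω} {k : ℕ}
    {X : Fin k → Ω → ℝ} (hX : iIndepFun X P) (hint : ∀ l, Integrable (X l) P) {μ : ℝ}
    (hmean : ∀ l, ∫ ω, X l ω ∂P = μ) (a : ℕ → ℝ) (c : ℝ) :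
    ∫ ω, ∑ j ∈ range (k + 1), a j * ∏ l ∈ univ.filter (fun l : Fin k => (l : ℕ) < j), (X l ω - c) ∂P
      = ∑ j ∈ range (k + 1), a j * (μ - c) ^ j := by
  have := hX.isProbabilityMeasure
  have hY : iIndepFun (fun l ω => X l ω - c) P := hX.comp _ fun _ => measurable_sub_const c
  have hYint (l : Fin k) : Integrable (fun ω => X l ω - c) P := (hint l).sub (integrable_const c)
  have hYmean (l : Fin k) : ∫ ω, (X l ω - c) ∂P = μ - c := by
    simp [integral_sub (hint l) (integrable_const c), hmean l]
  rw [integral_finsetSum _ fun j _ => (hY.integrable_finset_prod hYint _).const_mul _]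
  refine sum_congr rfl fun j hj => ?_
  rw [integral_const_mul, hY.integral_finset_prod hYint, prod_congr rfl fun l _ => hYmean l,
    prod_const, Fin.card_filter_val_lt, min_eq_right (Nat.lt_succ_iff.1 (mem_range.1 hj))]

theorem stmt3_general {Ω : Type*} [MeasurableSpace Ω] (P : Measure Ω) [IsProbabilityMeasure P]
    (k : ℕ) (X : Fin k → Ω → ℝ) (μ lam p α : ℝ)
    (hindep : iIndepFun X P)
    (hL2 : ∀ l, MemLp (X l) 2 P)
    (hmean : ∀ l, ∫ ω, X l ω ∂P = μ)
    (hp : 2 ≤ p) (hμ : 0 < μ)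
    (hα0 : 0 ≤ α) (hα : α < 1 / 2)
    (hlam : |lam - μ| ≤ α * μ)
    (hk : p < k + 1) :
    |(∫ ω, (∑ j ∈ Finset.range (k + 1),
        genBinom p j * lam ^ (p - j) *
          ∏ l ∈ Finset.univ.filter (fun l : Fin k => (l : ℕ) < j), (X l ω - lam)) ∂P)
      - μ ^ p|
      ≤ (α / (1 - α)) ^ (k + 1) * μ ^ p * (p / (k + 1)) ^ (⌊p⌋₊ + 1) ∧
    (∀ m : ℕ, p = m →
      (∫ ω, (∑ j ∈ Finset.range (k + 1),
        genBinom p j * lam ^ (p - j) *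
          ∏ l ∈ Finset.univ.filter (fun l : Fin k => (l : ℕ) < j), (X l ω - lam)) ∂P)
      = μ ^ p) := by
  rw [integral_sum_mul_prod_filter_lt_sub hindep (fun l => (hL2 l).integrable one_le_two) hmean
    (fun j => genBinom p j * lam ^ (p - j)) lam]
  have hbias := abs_taylor_rpow_sub_le (p := p) (by linarith) hμ hα0 (by linarith) hlam
    (n := k) hk.le
  refine ⟨hbias.trans ?_, fun m hm => ?_⟩
  · have hcoef := abs_genBinom_le (p := p) (by linarith) (n := k + 1) (by exact_mod_cast hk)
    push_cast at hcoef ⊢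
    rw [mul_comm]
    have hα1 : 0 ≤ α / (1 - α) := div_nonneg hα0 (by linarith)
    gcongr
  · subst hm
    rw [genBinom_natCast_of_lt (by exact_mod_cast hk), abs_zero, zero_mul] at hbias
    exact sub_eq_zero.1 (abs_nonpos_iff.1 hbias)

/-- Bias of the Taylor polynomial estimator for `ψ(t) = t^p`, `p ≥ 2`, `μ > 0`,
`|λ − μ| ≤ αμ` with `0 ≤ α < 1/2`, `k + 1 > p`:
`|E[ϑ] − μ^p| ≤ (α/(1−α))^(k+1) μ^p (p/(k+1))^(⌊p⌋+1)`;
and if `p` is an integer then `E[ϑ] = μ^p`. -/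
theorem stmt3 {Ω : Type*} [MeasurableSpace Ω] (P : Measure Ω) [IsProbabilityMeasure P]
    (k : ℕ) (X : Fin k → Ω → ℝ) (μ σ lam p α : ℝ)
    (hmeas : ∀ l, Measurable (X l))
    (hindep : iIndepFun X P)
    (hL2 : ∀ l, MemLp (X l) 2 P)
    (hmean : ∀ l, ∫ ω, X l ω ∂P = μ)
    (hvar : ∀ l, variance (X l) P ≤ σ ^ 2)
    (hp : 2 ≤ p) (hμ : 0 < μ)
    (hα0 : 0 ≤ α) (hα : α < 1 / 2)
    (hlam : |lam - μ| ≤ α * μ)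
    (hk : p < k + 1) :
    |(∫ ω, (∑ j ∈ Finset.range (k + 1),
        genBinom p j * lam ^ (p - j) *
          ∏ l ∈ Finset.univ.filter (fun l : Fin k => (l : ℕ) < j), (X l ω - lam)) ∂P)
      - μ ^ p|
      ≤ (α / (1 - α)) ^ (k + 1) * μ ^ p * (p / (k + 1)) ^ (⌊p⌋₊ + 1) ∧
    (∀ m : ℕ, p = m →
      (∫ ω, (∑ j ∈ Finset.range (k + 1),
        genBinom p j * lam ^ (p - j) *
          ∏ l ∈ Finset.univ.filter (fun l : Fin k => (l : ℕ) < j), (X l ω - lam)) ∂P)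
      = μ ^ p) :=
  stmt3_general P k X μ lam p α hindep hL2 hmean hp hμ hα0 hα hlam hk
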